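/- Let L be a Lie algebra over a field K with basis (v_i)_{i∈I}, and let S(L) be its symmetric algebra with its Poisson bracket. Then: (a) S(L) is strongly solvable if and only if L is abelian; (b) if the characteristic of K is not 2, then S(L) is solvable if and only if L is abelian. -/

import Mathlib

/-!
If `L` is abelian the bracket of `S(L)` vanishes. Otherwise `S(L)` is a domain with a pair
`{x, y} ≠ 0`. Then the bracket cannot vanish on a nonzero principal ideal `cS`: if `{cx, c}`,
`{cy, c}` vanish then `{cx, cy} = c² {x, y}`. So every term of the upper derived series contains a
nonzero principal ideal. For the derived series, put `u_{n+1} = u_n {x, u_n}`; the identity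
`{x^(a+d+1) u, x^(a+1) u} = d x^(2a+d+1) u {x, u}` with `d = 1` and `d = 2` (invertible as
`char K ≠ 2`) reaches all large exponents of both parities, so `x^m u_n ∈ δ_n` for all
large `m`, and `u_0` can be chosen so that no `u_n` vanishes.
-/

open MvPolynomial

/-- The derived series of a Poisson algebra `S` with bracket `P`: `δ 0 = S` and `δ (n+1)` is
the `K`-span of all brackets `{a, b}` with `a, b ∈ δ n`. -/
def poissonDerivedSeries (K S : Type*) [Field K] [CommRing S] [Algebra K S]
    (P : S →ₗ[K] S →ₗ[K] S) : ℕ → Submodule K S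
  | 0 => ⊤
  | n + 1 => Submodule.span K
      {x : S | ∃ a ∈ poissonDerivedSeries K S P n, ∃ b ∈ poissonDerivedSeries K S P n,
        x = P a b}

/-- The upper derived series of a Poisson algebra `S` with bracket `P`: `δ̃ 0 = S` and
`δ̃ (n+1)` is the `K`-span of all products `{a, b} * c` with `a, b ∈ δ̃ n`, `c ∈ S`. -/
def poissonUpperDerivedSeries (K S : Type*) [Field K] [CommRing S] [Algebra K S]
    (P : S →ₗ[K] S →ₗ[K] S) : ℕ → Submodule K S
  | 0 => ⊤
  | n + 1 => Submodule.span K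
      {x : S | ∃ a ∈ poissonUpperDerivedSeries K S P n,
        ∃ b ∈ poissonUpperDerivedSeries K S P n, ∃ c : S, x = P a b * c}


namespace PoissonBracket

section CommRing

variable {R S : Type*} [CommRing R] [CommRing S] [Algebra R S] {P : S →ₗ[R] S →ₗ[R] S}

theorem bracket_swap (halt : ∀ f, P f f = 0) (f g : S) : P f g = -P g f :=
  (LinearMap.IsAlt.neg halt g f).symm

theorem bracket_mul_right (halt : ∀ f, P f f = 0)
    (hleib : ∀ f g h, P (f * g) h = f * P g h + g * P f h) (h f g : S) :
    P h (f * g) = f * P h g + g * P h f := by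
  rw [bracket_swap halt h, hleib, bracket_swap halt g, bracket_swap halt f]
  ring

def hamiltonian (halt : ∀ f, P f f = 0)
    (hleib : ∀ f g h, P (f * g) h = f * P g h + g * P f h) (x : S) : Derivation R S S :=
  Derivation.mk' (P x) (bracket_mul_right halt hleib x)

@[simp]
theorem hamiltonian_apply (halt : ∀ f, P f f = 0)
    (hleib : ∀ f g h, P (f * g) h = f * P g h + g * P f h) (x f : S) :
    hamiltonian halt hleib x f = P x f :=
  rfl

theorem bracket_pow_right (halt : ∀ f, P f f = 0)
    (hleib : ∀ f g h, P (f * g) h = f * P g h + g * P f h) (x u : S) (n : ℕ) :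
    P x (u ^ n) = n * u ^ (n - 1) * P x u := by
  have := (hamiltonian halt hleib x).leibniz_pow u n
  rwa [hamiltonian_apply, hamiltonian_apply, nsmul_eq_mul, smul_eq_mul, ← mul_assoc] at this

theorem bracket_pow_mul_pow_mul (halt : ∀ f, P f f = 0)
    (hleib : ∀ f g h, P (f * g) h = f * P g h + g * P f h) (x u : S) (a d : ℕ) :
    P (x ^ (a + d + 1) * u) (x ^ (a + 1) * u) = (d : R) • (x ^ (2 * a + d + 1) * (u * P x u)) := by
  have hxx : P (x ^ (a + d + 1)) (x ^ (a + 1)) = 0 := by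
    rw [bracket_swap halt, bracket_pow_right halt hleib, bracket_swap halt _ x,
      bracket_pow_right halt hleib, halt]
    simp
  rw [hleib, bracket_mul_right halt hleib, bracket_mul_right halt hleib, halt, hxx,
    bracket_swap halt (x ^ _), bracket_pow_right halt hleib, bracket_pow_right halt hleib,
    bracket_swap halt u x, Algebra.smul_def, map_natCast]
  simp only [add_tsub_cancel_right]
  push_cast
  ring

theorem exists_iterate_mul_bracket_eq_mul_pow (halt : ∀ f, P f f = 0)
    (hleib : ∀ f g h, P (f * g) h = f * P g h + g * P f h) {x g : S} (hbb : P x (P x g) = 0)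
    (n : ℕ) : ∃ k, (fun u => u * P x u)^[n] g = g * P x g ^ k := by
  induction n with
  | zero => exact ⟨0, by simp⟩
  | succ n ih =>
    obtain ⟨k, hk⟩ := ih
    refine ⟨2 * k + 1, ?_⟩
    rw [Function.iterate_succ_apply', hk, bracket_mul_right halt hleib,
      bracket_pow_right halt hleib, hbb]
    ring

theorem exists_bracket_mul_mul_ne_zero [IsDomain S] (halt : ∀ f, P f f = 0)
    (hleib : ∀ f g h, P (f * g) h = f * P g h + g * P f h) {x y c : S} (hxy : P x y ≠ 0)
    (hc : c ≠ 0) : ∃ a b, P (c * a) (c * b) ≠ 0 := by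
  by_contra! h
  have hcomm : ∀ a, P a c = 0 := fun a => by
    have := h a 1
    rw [mul_one, hleib, halt, mul_zero, add_zero] at this
    exact (mul_eq_zero.1 this).resolve_left hc
  apply hxy
  have := h x y
  rw [hleib, bracket_mul_right halt hleib, bracket_mul_right halt hleib, hcomm,
    bracket_swap halt c, hcomm, halt] at this
  simpa [hc] using this

end CommRing

section Field

variable {K S : Type*} [Field K] [CommRing S] [Algebra K S] {P : S →ₗ[K] S →ₗ[K] S}

theorem exists_mul_mem_poissonUpperDerivedSeries [IsDomain S] (halt : ∀ f, P f f = 0)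
    (hleib : ∀ f g h, P (f * g) h = f * P g h + g * P f h) {x y : S} (hxy : P x y ≠ 0) (n : ℕ) :
    ∃ c ≠ 0, ∀ w, c * w ∈ poissonUpperDerivedSeries K S P n := by
  induction n with
  | zero => exact ⟨1, one_ne_zero, fun _ => Submodule.mem_top⟩
  | succ n ih =>
    obtain ⟨c, hc, hcS⟩ := ih
    obtain ⟨a, b, hab⟩ := exists_bracket_mul_mul_ne_zero halt hleib hxy hc
    exact ⟨P (c * a) (c * b), hab, fun w => Submodule.subset_span ⟨_, hcS a, _, hcS b, w, rfl⟩⟩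

theorem exists_poissonUpperDerivedSeries_eq_bot_iff [IsDomain S] (halt : ∀ f, P f f = 0)
    (hleib : ∀ f g h, P (f * g) h = f * P g h + g * P f h) :
    (∃ s, poissonUpperDerivedSeries K S P s = ⊥) ↔ P = 0 := by
  refine ⟨fun ⟨s, hs⟩ => ?_, fun hP => ⟨1, by simp [poissonUpperDerivedSeries, hP]⟩⟩
  by_contra hP
  obtain ⟨x, y, hxy⟩ : ∃ x y, P x y ≠ 0 := by
    by_contra! h
    exact hP (LinearMap.ext₂ h)
  obtain ⟨c, hc, hcS⟩ := exists_mul_mem_poissonUpperDerivedSeries halt hleib hxy s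
  exact hc (by simpa [hs] using hcS 1)

theorem pow_mul_mul_bracket_mem_poissonDerivedSeries_succ (halt : ∀ f, P f f = 0)
    (hleib : ∀ f g h, P (f * g) h = f * P g h + g * P f h) (h2 : (2 : K) ≠ 0) {x u : S}
    {n N : ℕ} (hu : ∀ m ≥ N, x ^ m * u ∈ poissonDerivedSeries K S P n) :
    ∀ m ≥ 2 * N + 2, x ^ m * (u * P x u) ∈ poissonDerivedSeries K S P (n + 1) := by
  have hmem : ∀ a d : ℕ, (d : K) ≠ 0 → N ≤ a + 1 →
      x ^ (2 * a + d + 1) * (u * P x u) ∈ poissonDerivedSeries K S P (n + 1) := by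
    intro a d hd ha
    rw [← Submodule.smul_mem_iff _ hd, ← bracket_pow_mul_pow_mul halt hleib]
    exact Submodule.subset_span ⟨_, hu _ (by omega), _, hu _ ha, rfl⟩
  intro m hm
  obtain ⟨a, rfl | rfl⟩ : ∃ a, m = 2 * a + 1 + 1 ∨ m = 2 * a + 2 + 1 := ⟨m / 2 - 1, by omega⟩
  · exact hmem a 1 (by simp) (by omega)
  · exact hmem a 2 (by exact_mod_cast h2) (by omega)

theorem mul_bracket_self_eq_bracket (halt : ∀ f, P f f = 0)
    (hleib : ∀ f g h, P (f * g) h = f * P g h + g * P f h) (h2 : (2 : K) ≠ 0) (x u : S) :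
    u * P x u = P x ((2 : K)⁻¹ • u ^ 2) := by
  have h2u : ((2 : ℕ) : S) * u ^ (2 - 1) * P x u = (2 : K) • (u * P x u) := by
    rw [two_smul]
    push_cast
    ring
  rw [map_smul, bracket_pow_right halt hleib, h2u, inv_smul_smul₀ h2]

theorem exists_forall_iterate_mul_bracket_ne_zero [IsDomain S] (halt : ∀ f, P f f = 0)
    (hleib : ∀ f g h, P (f * g) h = f * P g h + g * P f h) (h2 : (2 : K) ≠ 0) {x y : S}
    (hxy : P x y ≠ 0) : ∃ c, ∀ n, (fun u => u * P x u)^[n] c ≠ 0 := by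
  by_cases hnil : ∃ g, P x g ≠ 0 ∧ P x (P x g) = 0
  · obtain ⟨g, hb, hbb⟩ := hnil
    have hg : g ≠ 0 := by
      rintro rfl
      simp at hb
    refine ⟨g, fun n => ?_⟩
    obtain ⟨k, hk⟩ := exists_iterate_mul_bracket_eq_mul_pow halt hleib hbb n
    rw [hk]
    exact mul_ne_zero hg (pow_ne_zero _ hb)
  -- Now `{x, ·}` has no nonzero zeros in its image, and `u {x, u} = {x, u² / 2}` keeps the
  -- iterates of `{x, y}` in that image.
  push Not at hnil
  refine ⟨P x y, fun n => ?_⟩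
  suffices ∀ n, ∃ q, (fun u => u * P x u)^[n] (P x y) = P x q ∧ P x q ≠ 0 by
    obtain ⟨q, hq, hq0⟩ := this n
    exact hq ▸ hq0
  intro n
  induction n with
  | zero => exact ⟨y, rfl, hxy⟩
  | succ n ih =>
    obtain ⟨q, hq, hq0⟩ := ih
    refine ⟨(2 : K)⁻¹ • (P x q) ^ 2, ?_, ?_⟩
    · rw [Function.iterate_succ_apply', hq, mul_bracket_self_eq_bracket halt hleib h2]
    · rw [← mul_bracket_self_eq_bracket halt hleib h2]
      exact mul_ne_zero hq0 (hnil q hq0)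

theorem exists_poissonDerivedSeries_eq_bot_iff [IsDomain S] (halt : ∀ f, P f f = 0)
    (hleib : ∀ f g h, P (f * g) h = f * P g h + g * P f h) (h2 : (2 : K) ≠ 0) :
    (∃ s, poissonDerivedSeries K S P s = ⊥) ↔ P = 0 := by
  refine ⟨fun ⟨s, hs⟩ => ?_, fun hP => ⟨1, by simp [poissonDerivedSeries, hP]⟩⟩
  by_contra hP
  obtain ⟨x, y, hxy⟩ : ∃ x y, P x y ≠ 0 := by
    by_contra! h
    exact hP (LinearMap.ext₂ h)
  have hx : x ≠ 0 := by
    rintro rfl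
    simp at hxy
  obtain ⟨c, hc⟩ := exists_forall_iterate_mul_bracket_ne_zero halt hleib h2 hxy
  have hmem : ∀ n, ∃ N, ∀ m ≥ N,
      x ^ m * (fun u => u * P x u)^[n] c ∈ poissonDerivedSeries K S P n := by
    intro n
    induction n with
    | zero => exact ⟨0, fun _ _ => Submodule.mem_top⟩
    | succ n ih =>
      obtain ⟨N, hN⟩ := ih
      refine ⟨2 * N + 2, ?_⟩
      simpa only [Function.iterate_succ_apply'] using
        pow_mul_mul_bracket_mem_poissonDerivedSeries_succ halt hleib h2 hN
  obtain ⟨N, hN⟩ := hmem s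
  have := hN N le_rfl
  rw [hs, Submodule.mem_bot] at this
  exact mul_ne_zero (pow_ne_zero _ hx) (hc s) this

end Field

end PoissonBracket

theorem MvPolynomial.bracket_eq_zero_iff {R σ : Type*} [CommRing R]
    {P : MvPolynomial σ R →ₗ[R] MvPolynomial σ R →ₗ[R] MvPolynomial σ R}
    (halt : ∀ f, P f f = 0) (hleib : ∀ f g h, P (f * g) h = f * P g h + g * P f h) :
    P = 0 ↔ ∀ i j, P (X i) (X j) = 0 := by
  refine ⟨fun hP i j => by simp [hP], fun hX => ?_⟩
  have hXi : ∀ i, PoissonBracket.hamiltonian halt hleib (X i) = 0 := fun i =>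
    MvPolynomial.derivation_ext (by simpa using hX i)
  have hall : ∀ f, PoissonBracket.hamiltonian halt hleib f = 0 := fun f =>
    MvPolynomial.derivation_ext fun i => by
      simpa [PoissonBracket.bracket_swap halt f] using congr($(hXi i) f)
  exact LinearMap.ext₂ fun f g => by simpa using congr($(hall f) g)

theorem isLieAbelian_iff_forall_lie_basis_eq_zero {R L ι : Type*} [CommRing R] [LieRing L]
    [LieAlgebra R L] (B : Module.Basis ι R L) : IsLieAbelian L ↔ ∀ i j, ⁅B i, B j⁆ = 0 := by
  refine ⟨fun _ i j => trivial_lie_zero L L _ _, fun h => ⟨fun u v => ?_⟩⟩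
  have := LinearMap.ext_basis B B (B := (LieModule.toEnd R L L : L →ₗ[R] L →ₗ[R] L)) (B' := 0)
    (by simpa using h)
  simpa using congr($this u v)

theorem symmetricAlgebra_solvable_iff_abelian_general
    {K L I : Type*} [Field K] [LieRing L] [LieAlgebra K L] (B : Module.Basis I K L)
    (P : MvPolynomial I K →ₗ[K] MvPolynomial I K →ₗ[K] MvPolynomial I K)
    (halt : ∀ f, P f f = 0)
    (hleib : ∀ f g h, P (f * g) h = f * P g h + g * P f h)
    (hX : ∀ i j, P (X i) (X j) = B.constr K (fun i => (X i : MvPolynomial I K)) ⁅B i, B j⁆) :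
    ((∃ s : ℕ, poissonUpperDerivedSeries K (MvPolynomial I K) P s = ⊥) ↔ IsLieAbelian L) ∧
    ((ringChar K ≠ 2) →
      ((∃ s : ℕ, poissonDerivedSeries K (MvPolynomial I K) P s = ⊥) ↔ IsLieAbelian L)) := by
  have hP : P = 0 ↔ IsLieAbelian L := by
    rw [MvPolynomial.bracket_eq_zero_iff halt hleib, isLieAbelian_iff_forall_lie_basis_eq_zero B]
    simp only [hX, map_eq_zero_iff _ (B.injective_constr_of_linearIndependent
      (linearIndependent_X I K))]
  exact ⟨(PoissonBracket.exists_poissonUpperDerivedSeries_eq_bot_iff halt hleib).trans hP,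
    fun hchar => (PoissonBracket.exists_poissonDerivedSeries_eq_bot_iff halt hleib
      (Ring.two_ne_zero hchar)).trans hP⟩

/-- For a Lie algebra `L` with basis `(v_i)` over a field `K`, identify the symmetric
algebra `S(L)` with the polynomial algebra `K[X_i]`, let `θ : L → S(L)` be the linear map
with `θ(v_i) = X_i`, and let `{·,·}` be the Poisson bracket, i.e. the unique bilinear,
alternating map satisfying the Leibniz rule with `{X_i, X_j} = θ([v_i, v_j])`.  Then:
(a) `S(L)` is strongly solvable iff `L` is abelian; and (b) if `char K ≠ 2`, then `S(L)` is
solvable iff `L` is abelian. -/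
theorem symmetricAlgebra_solvable_iff_abelian
    {K L I : Type*} [Field K] [LieRing L] [LieAlgebra K L] (B : Module.Basis I K L)
    (P : MvPolynomial I K →ₗ[K] MvPolynomial I K →ₗ[K] MvPolynomial I K)
    (halt : ∀ f, P f f = 0)
    (hanti : ∀ f g, P f g = - P g f)
    (hjac : ∀ f g h, P f (P g h) = P (P f g) h + P g (P f h))
    (hleib : ∀ f g h, P (f * g) h = f * P g h + g * P f h)
    (hX : ∀ i j, P (X i) (X j) = B.constr K (fun i => (X i : MvPolynomial I K)) ⁅B i, B j⁆) :
    ((∃ s : ℕ, poissonUpperDerivedSeries K (MvPolynomial I K) P s = ⊥) ↔ IsLieAbelian L) ∧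
    ((ringChar K ≠ 2) →
      ((∃ s : ℕ, poissonDerivedSeries K (MvPolynomial I K) P s = ⊥) ↔ IsLieAbelian L)) :=
  symmetricAlgebra_solvable_iff_abelian_general B P halt hleib hX
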